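/- arXiv:1404.5507 — 6 statements merged into one kernel-verified Lean document; each statement's English description precedes it below -/
import Mathlib

section
/- For a finite input alphabet X, finite output alphabet Y, a channel W : X → P(Y), and input distributions p, q on X with the same output distribution W_q = W_p, the conditional information variance satisfies V_{q,W_p} ≤ U_{q,W}, i.e., Σ_{x,y} q(x)W_x(y)[log(W_x(y)/W_p(y)) − D(W_x‖W_p)]² ≤ Σ_{x,y} q(x)W_x(y)[log(W_x(y)/W_q(y)) − I(q,W)]². -/
/-! Conditioning on `x` and using `W_q = W_p`, the two sides differ only in the centring
constant: the left centres `log (W_x / W_q)` under `W_x` at its own mean `D(W_x‖W_p)`, the right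
at `I(q,W)`, and a weighted mean is the constant minimising the mean squared deviation. -/

open Finset

theorem sum_mul_sub_sq_eq {ι : Type*} (s : Finset ι) (w g : ι → ℝ) (hw : ∑ i ∈ s, w i = 1)
    (c : ℝ) :
    ∑ i ∈ s, w i * (g i - c) ^ 2
      = ∑ i ∈ s, w i * (g i - ∑ j ∈ s, w j * g j) ^ 2 + (∑ j ∈ s, w j * g j - c) ^ 2 := by
  set m := ∑ j ∈ s, w j * g j
  have hcentred : ∑ i ∈ s, w i * (g i - m) = 0 := by
    simp only [mul_sub, sum_sub_distrib, ← sum_mul, hw, m]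
    ring
  calc ∑ i ∈ s, w i * (g i - c) ^ 2
      = ∑ i ∈ s, (w i * (g i - m) ^ 2 + 2 * (m - c) * (w i * (g i - m)) + (m - c) ^ 2 * w i) :=
        sum_congr rfl fun i _ => by ring
    _ = ∑ i ∈ s, w i * (g i - m) ^ 2 + (m - c) ^ 2 := by
        rw [sum_add_distrib, sum_add_distrib, ← mul_sum, ← mul_sum, hcentred, hw]
        ring

theorem sum_mul_sub_weightedMean_sq_le {ι : Type*} (s : Finset ι) (w g : ι → ℝ)
    (hw : ∑ i ∈ s, w i = 1) (c : ℝ) :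
    ∑ i ∈ s, w i * (g i - ∑ j ∈ s, w j * g j) ^ 2 ≤ ∑ i ∈ s, w i * (g i - c) ^ 2 := by
  rw [sum_mul_sub_sq_eq s w g hw c]
  exact le_add_of_nonneg_right (sq_nonneg _)

theorem stmt_0_general {X Y : Type*} [Fintype X] [Fintype Y]
    (W : X → Y → ℝ) (p q : X → ℝ)
    (hW1 : ∀ x, ∑ y, W x y = 1)
    (hq0 : ∀ x, 0 ≤ q x)
    (heq : ∀ y, ∑ x, q x * W x y = ∑ x, p x * W x y) :
    (∑ x, ∑ y, q x * W x y *
        (Real.log (W x y / ∑ x', p x' * W x' y)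
          - ∑ y', W x y' * Real.log (W x y' / ∑ x', p x' * W x' y')) ^ 2)
      ≤ ∑ x, ∑ y, q x * W x y *
        (Real.log (W x y / ∑ x', q x' * W x' y)
          - ∑ x'', ∑ y', q x'' * W x'' y' *
              Real.log (W x'' y' / ∑ x', q x' * W x' y')) ^ 2 := by
  simp only [← heq]
  refine sum_le_sum fun x _ => ?_
  simp only [mul_assoc, ← mul_sum]
  exact mul_le_mul_of_nonneg_left
    (sum_mul_sub_weightedMean_sq_le univ (W x) (fun y => Real.log (W x y / ∑ x', q x' * W x' y))
      (hW1 x) _) (hq0 x)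

/-- For distributions `p q` on finite `X` with identical output distributions
`W_q = W_p`, the conditional information variance `V_{q,W_p}` is at most the
unconditional information variance `U_{q,W}`. -/
theorem stmt_0 {X Y : Type*} [Fintype X] [Fintype Y]
    (W : X → Y → ℝ) (p q : X → ℝ)
    (hW0 : ∀ x y, 0 ≤ W x y) (hW1 : ∀ x, ∑ y, W x y = 1)
    (hp0 : ∀ x, 0 ≤ p x) (hp1 : ∑ x, p x = 1)
    (hq0 : ∀ x, 0 ≤ q x) (hq1 : ∑ x, q x = 1)
    (heq : ∀ y, ∑ x, q x * W x y = ∑ x, p x * W x y) :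
    (∑ x, ∑ y, q x * W x y *
        (Real.log (W x y / ∑ x', p x' * W x' y)
          - ∑ y', W x y' * Real.log (W x y' / ∑ x', p x' * W x' y')) ^ 2)
      ≤ ∑ x, ∑ y, q x * W x y *
        (Real.log (W x y / ∑ x', q x' * W x' y)
          - ∑ x'', ∑ y', q x'' * W x'' y' *
              Real.log (W x'' y' / ∑ x', q x' * W x' y')) ^ 2 :=
  stmt_0_general W p q hW1 hq0 heq
end

section
/- Under the hypotheses that W_q = W_p, equality V_{q,W_p} = U_{q,W} holds if and only if D(W_x‖W_p) = I(q,W) for all x with q(x) > 0. -/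
/-!
Write `L x y = log (W x y / W_p y)`. Since `W_q = W_p`, the unconditional information variance
`U_{q,W}` is the variance of `L` under `q × W` about its mean `I(q,W)`, while `V_{q,W_p}` is the
average over `x ~ q` of the variance of `L x ·` under `W x` about its own mean `D(W_x‖W_p)`.
The law of total variance gives `U - V = ∑ₓ q(x) (D(W_x‖W_p) - I(q,W))²`, a sum of nonnegative
terms, which vanishes exactly when every term with `q(x) > 0` does.
-/

open Finset

theorem Finset.sum_mul_sub_sq_eq_add_sq {ι R : Type*} [CommRing R] (s : Finset ι) (w f : ι → R)
    (hw : ∑ i ∈ s, w i = 1) (c : R) :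
    ∑ i ∈ s, w i * (f i - c) ^ 2
      = ∑ i ∈ s, w i * (f i - ∑ j ∈ s, w j * f j) ^ 2 + (∑ j ∈ s, w j * f j - c) ^ 2 := by
  set m := ∑ j ∈ s, w j * f j
  have expand : ∀ i, w i * (f i - c) ^ 2
      = w i * (f i - m) ^ 2 + 2 * (m - c) * (w i * f i) - (2 * (m - c) * m - (m - c) ^ 2) * w i :=
    fun i => by ring
  simp only [expand, sum_sub_distrib, sum_add_distrib, ← mul_sum, hw]
  ring

theorem Finset.sum_mul_sq_eq_zero_iff {ι R : Type*} [Ring R] [LinearOrder R]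
    [IsStrictOrderedRing R] (s : Finset ι) (q g : ι → R)
    (hq : ∀ i ∈ s, 0 ≤ q i) :
    ∑ i ∈ s, q i * g i ^ 2 = 0 ↔ ∀ i ∈ s, 0 < q i → g i = 0 := by
  rw [sum_eq_zero_iff_of_nonneg fun i hi => mul_nonneg (hq i hi) (sq_nonneg _)]
  refine forall₂_congr fun i hi => ⟨fun h hqi => ?_, fun h => ?_⟩
  · simpa [hqi.ne'] using h
  · rcases (hq i hi).eq_or_lt with hqi | hqi
    · simp [← hqi]
    · simp [h hqi]

theorem sum_sum_mul_sub_sq_eq_add_sum_mul_sq {X Y R : Type*} [Fintype X] [Fintype Y]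
    [CommRing R] (q : X → R) (W L : X → Y → R) (hW : ∀ x, ∑ y, W x y = 1) :
    ∑ x, ∑ y, q x * W x y * (L x y - ∑ x', ∑ y', q x' * W x' y' * L x' y') ^ 2
      = ∑ x, ∑ y, q x * W x y * (L x y - ∑ y', W x y' * L x y') ^ 2
        + ∑ x, q x * (∑ y', W x y' * L x y' - ∑ x', ∑ y', q x' * W x' y' * L x' y') ^ 2 := by
  simp only [mul_assoc (q _), ← mul_sum]
  rw [← sum_add_distrib]
  refine sum_congr rfl fun x _ => ?_
  rw [← mul_add, sum_mul_sub_sq_eq_add_sq _ _ _ (hW x)]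

theorem stmt_1_general {X Y : Type*} [Fintype X] [Fintype Y]
    (W : X → Y → ℝ) (p q : X → ℝ)
    (hW1 : ∀ x, ∑ y, W x y = 1)
    (hq0 : ∀ x, 0 ≤ q x)
    (heq : ∀ y, ∑ x, q x * W x y = ∑ x, p x * W x y) :
    ((∑ x, ∑ y, q x * W x y *
        (Real.log (W x y / ∑ x', p x' * W x' y)
          - ∑ y', W x y' * Real.log (W x y' / ∑ x', p x' * W x' y')) ^ 2)
      = ∑ x, ∑ y, q x * W x y *
        (Real.log (W x y / ∑ x', q x' * W x' y)
          - ∑ x'', ∑ y', q x'' * W x'' y' *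
              Real.log (W x'' y' / ∑ x', q x' * W x' y')) ^ 2)
    ↔ ∀ x, 0 < q x →
        (∑ y, W x y * Real.log (W x y / ∑ x', p x' * W x' y))
          = ∑ x'', ∑ y', q x'' * W x'' y' *
              Real.log (W x'' y' / ∑ x', q x' * W x' y') := by
  simp only [heq]
  rw [sum_sum_mul_sub_sq_eq_add_sum_mul_sq q W _ hW1, left_eq_add,
    sum_mul_sq_eq_zero_iff _ _ _ fun x _ => hq0 x]
  simp only [mem_univ, true_implies, sub_eq_zero]

/-- Under `W_q = W_p`, equality `V_{q,W_p} = U_{q,W}` holds iff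
`D(W_x‖W_p) = I(q,W)` for all `x` with `q x > 0`. -/
theorem stmt_1 {X Y : Type*} [Fintype X] [Fintype Y]
    (W : X → Y → ℝ) (p q : X → ℝ)
    (hW0 : ∀ x y, 0 ≤ W x y) (hW1 : ∀ x, ∑ y, W x y = 1)
    (hp0 : ∀ x, 0 ≤ p x) (hp1 : ∑ x, p x = 1)
    (hq0 : ∀ x, 0 ≤ q x) (hq1 : ∑ x, q x = 1)
    (heq : ∀ y, ∑ x, q x * W x y = ∑ x, p x * W x y) :
    ((∑ x, ∑ y, q x * W x y *
        (Real.log (W x y / ∑ x', p x' * W x' y)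
          - ∑ y', W x y' * Real.log (W x y' / ∑ x', p x' * W x' y')) ^ 2)
      = ∑ x, ∑ y, q x * W x y *
        (Real.log (W x y / ∑ x', q x' * W x' y)
          - ∑ x'', ∑ y', q x'' * W x'' y' *
              Real.log (W x'' y' / ∑ x', q x' * W x' y')) ^ 2)
    ↔ ∀ x, 0 < q x →
        (∑ y, W x y * Real.log (W x y / ∑ x', p x' * W x' y))
          = ∑ x'', ∑ y', q x'' * W x'' y' *
              Real.log (W x'' y' / ∑ x', q x' * W x' y') :=
  stmt_1_general W p q hW1 hq0 heq
end

section
/- For the channel W on X = {0,1,e}, Y = {0,1} with W_0(0)=1, W_1(1)=1, W_e(0)=W_e(1)=1/2, and the input distribution p with p(0)=p(1)=1/2, the mutual information satisfies I(p,W) = log 2, while S_{W_p} := min{I(q,W) : q ∈ P(X), W_q = W_p} = 0. -/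
/-!
Mutual information is nonnegative (Gibbs' inequality, via `log t ≥ 1 - 1/t`) and vanishes at
every point mass, whose output is a single row of the channel. The erasure input `e` has the
same output as `p`, namely the uniform distribution on `{0, 1}`, so the minimum `0` is attained
at `δ_e`, whereas `p` feeds `{0, 1}` noiselessly and carries one full bit, `log 2`.
-/

open Finset Real

/-- The hypothesis `a * w ≤ r` excludes `r = 0 < a * w`, where
`log (w / r)` is the junk `log 0 = 0`. -/
lemma mul_sub_le_mul_mul_log_div {a w r : ℝ} (ha : 0 ≤ a) (hw : 0 ≤ w) (hr : a * w ≤ r) :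
    a * (w - r) ≤ a * w * log (w / r) := by
  rcases ha.eq_or_lt with rfl | ha
  · simp
  rcases hw.eq_or_lt with rfl | hw
  · simp only [mul_zero] at hr
    simp only [zero_sub, mul_neg, mul_zero, zero_mul, Left.neg_nonpos_iff]
    positivity
  have hr : 0 < r := (mul_pos ha hw).trans_le hr
  have hlog : 1 - r / w ≤ log (w / r) := by
    simpa using one_sub_inv_le_log_of_pos (div_pos hw hr)
  calc a * (w - r) = a * w * (1 - r / w) := by field_simp
    _ ≤ a * w * log (w / r) := by gcongr

section MutualInformation

variable {X Y : Type*} [Fintype X]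

def channelOutput (W : X → Y → ℝ) (q : X → ℝ) (y : Y) : ℝ := ∑ x, q x * W x y

lemma channelOutput_single [DecidableEq X] (W : X → Y → ℝ) (x₀ : X) :
    channelOutput W (Pi.single x₀ 1) = W x₀ := by
  ext y
  simp [channelOutput, Pi.single_apply]

variable [Fintype Y]

noncomputable def mutualInfo (W : X → Y → ℝ) (q : X → ℝ) : ℝ :=
  ∑ x, ∑ y, q x * W x y * log (W x y / channelOutput W q y)

lemma sum_sum_mul_sub_channelOutput {W : X → Y → ℝ} {q : X → ℝ} (hq : ∑ x, q x = 1) :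
    ∑ x, ∑ y, q x * (W x y - channelOutput W q y) = 0 := by
  rw [sum_comm]
  simp [mul_sub, sum_sub_distrib, ← sum_mul, hq, channelOutput]

theorem mutualInfo_nonneg {W : X → Y → ℝ} {q : X → ℝ} (hq₀ : ∀ x, 0 ≤ q x)
    (hq : ∑ x, q x = 1) (hW : ∀ x y, 0 ≤ W x y) : 0 ≤ mutualInfo W q := by
  rw [← sum_sum_mul_sub_channelOutput (W := W) hq]
  refine sum_le_sum fun x _ ↦ sum_le_sum fun y _ ↦ ?_
  refine mul_sub_le_mul_mul_log_div (hq₀ x) (hW x y) ?_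
  exact single_le_sum (f := fun x ↦ q x * W x y)
    (fun x _ ↦ mul_nonneg (hq₀ x) (hW x y)) (mem_univ x)

theorem mutualInfo_single [DecidableEq X] (W : X → Y → ℝ) (x₀ : X) :
    mutualInfo W (Pi.single x₀ 1) = 0 := by
  simp [mutualInfo, channelOutput_single, Pi.single_apply]

end MutualInformation

/-- For the channel `W` on `X = {0,1,e}`, `Y = {0,1}` with `W_0 = δ_0`,
`W_1 = δ_1`, `W_e` uniform, and `p = (1/2, 1/2, 0)`, one has `I(p,W) = log 2`
while `S_{W_p} = min{I(q,W) : W_q = W_p} = 0`. -/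
theorem stmt_2 :
    let W : Fin 3 → Fin 2 → ℝ := ![![1, 0], ![0, 1], ![1/2, 1/2]]
    let p : Fin 3 → ℝ := ![1/2, 1/2, 0]
    let I : (Fin 3 → ℝ) → ℝ := fun q =>
      ∑ x, ∑ y, q x * W x y * Real.log (W x y / ∑ x', q x' * W x' y)
    I p = Real.log 2 ∧
      IsLeast {r : ℝ | ∃ q : Fin 3 → ℝ, (∀ x, 0 ≤ q x) ∧ (∑ x, q x = 1) ∧
        (∀ y, ∑ x, q x * W x y = ∑ x, p x * W x y) ∧ I q = r} 0 := by
  intro W p I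
  have hW : ∀ x y, 0 ≤ W x y := by
    intro x y
    fin_cases x <;> fin_cases y <;> norm_num [W]
  refine ⟨?_, ⟨Pi.single 2 1, ?_, ?_, ?_, mutualInfo_single W 2⟩, ?_⟩
  · simp only [I, W, p, Fin.sum_univ_three, Fin.sum_univ_two, Matrix.cons_val_zero,
      Matrix.cons_val_one, Matrix.head_cons, Matrix.cons_val_two, Matrix.tail_cons]
    norm_num [log_inv]
    ring
  · intro x
    fin_cases x <;> simp
  · simp
  · intro y
    change channelOutput W _ y = _
    rw [channelOutput_single]
    fin_cases y <;> simp [W, p, Fin.sum_univ_three]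
  · rintro r ⟨q, hq₀, hq, -, rfl⟩
    exact mutualInfo_nonneg hq₀ hq hW
end

section
/- Let P and Q be probability distributions on a finite set Y and write Q = Q̂ + Q̃ where Q̂(y) = Q(y)·1[y ∈ T] and Q̃(y) = Q(y)·1[y ∉ T] for a set T ⊆ Y. Then for any α ≥ 0, (1/2)‖P − Q‖₁ ≥ P{P − e^α Q̂ ≥ 0} − e^{−α} − Q(T^c), where P{A ≥ 0} denotes the P-measure of {y : A(y) ≥ 0}. -/
/-!
With `S = {P - e^α Q̂ ≥ 0}`, the variational bound gives `½‖P − Q‖₁ ≥ P(S) − Q(S)`, and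
`Q(S) = Q̂(S) + Q̃(S) ≤ e^{−α} P(S) + Q(Tᶜ)` because `Q̂ ≤ e^{−α} P` pointwise on `S`.
-/

open Finset

section

variable {ι : Type*}

theorem sum_sub_le_half_sum_abs_sub [Fintype ι] (f g : ι → ℝ) (hfg : ∑ i, f i = ∑ i, g i)
    (s : Finset ι) : ∑ i ∈ s, (f i - g i) ≤ (1 / 2) * ∑ i, |f i - g i| := by
  classical
  have hsplit : ∑ i ∈ s, (f i - g i) = -∑ i ∈ sᶜ, (f i - g i) := by
    rw [eq_neg_iff_add_eq_zero, sum_add_sum_compl, sum_sub_distrib, hfg, sub_self]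
  have hs : ∑ i ∈ s, (f i - g i) ≤ ∑ i ∈ s, |f i - g i| :=
    sum_le_sum fun i _ => le_abs_self _
  have hsc : -∑ i ∈ sᶜ, (f i - g i) ≤ ∑ i ∈ sᶜ, |f i - g i| := by
    rw [← sum_neg_distrib]
    exact sum_le_sum fun i _ => neg_le_abs _
  have := sum_add_sum_compl s fun i => |f i - g i|
  linarith

theorem sum_filter_le_inv_mul_sum (s : Finset ι) (p q : ι → ℝ) {c : ℝ} (hc : 0 < c)
    (hp : ∀ i ∈ s, 0 ≤ p i) :
    ∑ i ∈ s.filter (fun i => 0 ≤ p i - c * q i), q i ≤ c⁻¹ * ∑ i ∈ s, p i := by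
  calc ∑ i ∈ s.filter (fun i => 0 ≤ p i - c * q i), q i
      ≤ ∑ i ∈ s.filter (fun i => 0 ≤ p i - c * q i), c⁻¹ * p i := by
        refine sum_le_sum fun i hi => ?_
        rw [le_inv_mul_iff₀ hc, ← sub_nonneg]
        exact (mem_filter.1 hi).2
    _ = c⁻¹ * ∑ i ∈ s.filter (fun i => 0 ≤ p i - c * q i), p i := by rw [mul_sum]
    _ ≤ c⁻¹ * ∑ i ∈ s, p i := by
        gcongr
        · exact fun i hi _ => hp i hi
        · exact filter_subset _ s

theorem sum_le_sum_ite_mem_add_sum_compl [Fintype ι] [DecidableEq ι] (q : ι → ℝ)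
    (hq : ∀ i, 0 ≤ q i) (s t : Finset ι) :
    ∑ i ∈ s, q i ≤ ∑ i ∈ s, (if i ∈ t then q i else 0) + ∑ i ∈ tᶜ, q i := by
  have hsplit : ∑ i ∈ s, q i = ∑ i ∈ s ∩ t, q i + ∑ i ∈ s \ t, q i :=
    (sum_inter_add_sum_sdiff s t q).symm
  have hdiff : ∑ i ∈ s \ t, q i ≤ ∑ i ∈ tᶜ, q i := by
    refine sum_le_sum_of_subset_of_nonneg ?_ fun i _ _ => hq i
    rw [sdiff_eq_inter_compl]
    exact inter_subset_right
  rw [sum_ite_mem]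
  linarith

end

theorem stmt_6_general {Y : Type*} [Fintype Y] [DecidableEq Y]
    (P Q : Y → ℝ) (T : Finset Y) (α : ℝ)
    (hP0 : ∀ y, 0 ≤ P y) (hP1 : ∑ y, P y = 1)
    (hQ0 : ∀ y, 0 ≤ Q y) (hQ1 : ∑ y, Q y = 1) :
    (1 / 2 : ℝ) * ∑ y, |P y - Q y| ≥
      (∑ y ∈ univ.filter
          (fun y => 0 ≤ P y - Real.exp α * (if y ∈ T then Q y else 0)), P y)
        - Real.exp (-α) - ∑ y ∈ Tᶜ, Q y := by
  set S := univ.filter fun y => 0 ≤ P y - Real.exp α * (if y ∈ T then Q y else 0)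
  have hvar := sum_sub_le_half_sum_abs_sub P Q (hP1.trans hQ1.symm) S
  have hmarkov : ∑ y ∈ S, (if y ∈ T then Q y else 0) ≤ Real.exp (-α) := by
    have := sum_filter_le_inv_mul_sum univ P (fun y => if y ∈ T then Q y else 0)
      (Real.exp_pos α) fun y _ => hP0 y
    rwa [hP1, mul_one, ← Real.exp_neg] at this
  have hsplit := sum_le_sum_ite_mem_add_sum_compl Q hQ0 S T
  rw [sum_sub_distrib] at hvar
  linarith

/-- Splitting `Q` into its part `Q̂` on `T` and the rest, for any `α ≥ 0`:
`(1/2)‖P − Q‖₁ ≥ P{P − e^α Q̂ ≥ 0} − e^{−α} − Q(Tᶜ)`. -/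
theorem stmt_6 {Y : Type*} [Fintype Y] [DecidableEq Y]
    (P Q : Y → ℝ) (T : Finset Y) (α : ℝ) (hα : 0 ≤ α)
    (hP0 : ∀ y, 0 ≤ P y) (hP1 : ∑ y, P y = 1)
    (hQ0 : ∀ y, 0 ≤ Q y) (hQ1 : ∑ y, Q y = 1) :
    (1 / 2 : ℝ) * ∑ y, |P y - Q y| ≥
      (∑ y ∈ univ.filter
          (fun y => 0 ≤ P y - Real.exp α * (if y ∈ T then Q y else 0)), P y)
        - Real.exp (-α) - ∑ y ∈ Tᶜ, Q y :=
  stmt_6_general P Q T α hP0 hP1 hQ0 hQ1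
end

section
/- Let C_n = {x₁,…,x_M} ⊆ Xⁿ be a resolvability code, B = {i : xᵢ ∈ A_n(δ)} the set of indices of atypical codewords, and δ' = |X|δ. Then for any α ≥ 0, (1/2)‖W_{C_n} − W_p^n‖₁ ≥ (|B|/M)·min_{i∈B} W_{xᵢ}^n(T_{W,δ}(xᵢ)) + Σ_{i∈B^c}(1/M)·W_{xᵢ}^n{W_{xᵢ}^n − e^α M W_p^n ≥ 0} − e^{−α} − W_p^n(T_{W_p,δ'}^c). -/
/-!
For every set `S` of output sequences, `½‖W_C − W_pⁿ‖₁ ≥ W_C(S) − W_pⁿ(S)`. Take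
`S = T_{W_p,δ'}ᶜ ∪ ⋃_{i ∉ B} D_i` with `D_i = {Wⁿ_{xᵢ} ≥ e^α M W_pⁿ}`.
If `y` is conditionally typical for `xᵢ`, its type is within `|X|δ` of `Σ_a P_{xᵢ}(a) W_a`,
so for an atypical codeword (`i ∈ B`) the whole set `T_{W,δ}(xᵢ)` lies in `T_{W_p,δ'}ᶜ ⊆ S`;
this gives the lower bound on `W_C(S)`. On `D_i` the likelihood ratio forces
`W_pⁿ(D_i) ≤ e^{-α}/M`, so `W_pⁿ(S) ≤ W_pⁿ(T_{W_p,δ'}ᶜ) + e^{-α}` by the union bound.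
-/

open Finset

section Sums

variable {ι α : Type*}

lemma sum_union_le_add [DecidableEq α] {f : α → ℝ} (hf : ∀ a, 0 ≤ f a) (s t : Finset α) :
    ∑ a ∈ s ∪ t, f a ≤ ∑ a ∈ s, f a + ∑ a ∈ t, f a := by
  rw [← sum_union_inter]
  exact le_add_of_nonneg_right (sum_nonneg fun a _ => hf a)

lemma sum_biUnion_le_sum_sum [DecidableEq α] {f : α → ℝ} (hf : ∀ a, 0 ≤ f a) (s : Finset ι)
    (t : ι → Finset α) : ∑ a ∈ s.biUnion t, f a ≤ ∑ i ∈ s, ∑ a ∈ t i, f a := by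
  rw [← sup_eq_biUnion]
  exact apply_sup_le_sum (f := fun u => ∑ a ∈ u, f a) sum_empty (sum_union_le_add hf _ _) s

lemma sum_pi_prod_eq_one {R : Type*} [CommSemiring R] [Fintype ι] [DecidableEq ι] [Fintype α]
    (f : ι → α → R) (hf : ∀ i, ∑ a, f i a = 1) : ∑ x : ι → α, ∏ i, f i (x i) = 1 := by
  simp [← Fintype.prod_sum, hf]

lemma card_mul_dite_inf'_le_sum {f : ι → ℝ} (s : Finset ι) :
    #s * (if h : s.Nonempty then s.inf' h f else 0) ≤ ∑ i ∈ s, f i := by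
  split_ifs with h
  · simpa using card_nsmul_le_sum s f _ fun i hi => inf'_le f hi
  · simp [not_nonempty_iff_eq_empty.1 h]

lemma sum_sub_sum_le_half_sum_abs [Fintype α] {P Q : α → ℝ} (h : ∑ a, P a = ∑ a, Q a)
    (S : Finset α) : ∑ a ∈ S, P a - ∑ a ∈ S, Q a ≤ 1 / 2 * ∑ a, |P a - Q a| := by
  have hsum : ∑ a, (P a - Q a) = 0 := by rw [sum_sub_distrib, h, sub_self]
  calc ∑ a ∈ S, P a - ∑ a ∈ S, Q a = ∑ a ∈ S, (P a - Q a) := (sum_sub_distrib ..).symm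
    _ ≤ ∑ a ∈ S, (|P a - Q a| + (P a - Q a)) / 2 :=
        sum_le_sum fun a _ => by linarith [le_abs_self (P a - Q a)]
    _ ≤ ∑ a, (|P a - Q a| + (P a - Q a)) / 2 :=
        sum_le_sum_of_subset_of_nonneg (subset_univ S)
          fun a _ _ => by linarith [neg_abs_le (P a - Q a)]
    _ = 1 / 2 * ∑ a, |P a - Q a| := by rw [← sum_div, sum_add_distrib, hsum]; ring

lemma mul_sum_filter_le_one [Fintype α] {P Q : α → ℝ} (hP0 : ∀ a, 0 ≤ P a)
    (hP1 : ∑ a, P a ≤ 1) (t : ℝ) :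
    t * ∑ a ∈ univ.filter (fun a => 0 ≤ P a - t * Q a), Q a ≤ 1 :=
  calc t * ∑ a ∈ univ.filter (fun a => 0 ≤ P a - t * Q a), Q a
      = ∑ a ∈ univ.filter (fun a => 0 ≤ P a - t * Q a), t * Q a := mul_sum ..
    _ ≤ ∑ a ∈ univ.filter (fun a => 0 ≤ P a - t * Q a), P a :=
        sum_le_sum fun _ ha => sub_nonneg.1 (mem_filter.1 ha).2
    _ ≤ ∑ a, P a := sum_le_sum_of_subset_of_nonneg (subset_univ _) fun a _ _ => hP0 a
    _ ≤ 1 := hP1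

lemma sum_sum_filter_le_exp_neg [Fintype α] {M : ℕ} (hM : 0 < M) {P : Fin M → α → ℝ}
    {Q : α → ℝ} (hP0 : ∀ i a, 0 ≤ P i a) (hP1 : ∀ i, ∑ a, P i a ≤ 1) (r : ℝ)
    (s : Finset (Fin M)) :
    ∑ i ∈ s, ∑ a ∈ univ.filter (fun a => 0 ≤ P i a - Real.exp r * M * Q a), Q a
      ≤ Real.exp (-r) := by
  have ht : 0 < Real.exp r * M := by positivity
  calc _ ≤ ∑ _i ∈ s, 1 / (Real.exp r * M) :=
        sum_le_sum fun i _ => (le_div_iff₀' ht).2 (mul_sum_filter_le_one (hP0 i) (hP1 i) _)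
    _ ≤ M * (1 / (Real.exp r * M)) := by
        rw [sum_const, nsmul_eq_mul]
        gcongr
        simpa using card_le_univ s
    _ = Real.exp (-r) := by rw [Real.exp_neg]; field_simp

lemma le_half_sum_abs_mixture_sub [Fintype α] [DecidableEq α] {M : ℕ} (hM : 0 < M)
    {P : Fin M → α → ℝ} {Q : α → ℝ} (hP0 : ∀ i b, 0 ≤ P i b) (hP1 : ∀ i, ∑ b, P i b = 1)
    (hQ0 : ∀ b, 0 ≤ Q b) (hQ1 : ∑ b, Q b = 1) (B : Finset (Fin M)) (T : Fin M → Finset α)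
    (E : Finset α) (hT : ∀ i ∈ B, T i ⊆ E) (r : ℝ) :
    (#B : ℝ) / M * (if h : B.Nonempty then B.inf' h (fun i => ∑ b ∈ T i, P i b) else 0)
      + ∑ i ∈ Bᶜ, 1 / M * ∑ b ∈ univ.filter (fun b => 0 ≤ P i b - Real.exp r * M * Q b), P i b
      - Real.exp (-r) - ∑ b ∈ E, Q b
      ≤ 1 / 2 * ∑ b, |1 / M * ∑ i, P i b - Q b| := by
  let D i := univ.filter fun b => 0 ≤ P i b - Real.exp r * M * Q b
  let S := E ∪ Bᶜ.biUnion D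
  have hmass : ∑ b, 1 / M * ∑ i, P i b = ∑ b, Q b := by
    rw [← mul_sum, sum_comm]
    simp [hP1, hQ1, hM.ne']
  have hmixture : 1 / M * (∑ i ∈ B, ∑ b ∈ T i, P i b + ∑ i ∈ Bᶜ, ∑ b ∈ D i, P i b)
      ≤ ∑ b ∈ S, 1 / M * ∑ i, P i b := by
    rw [← mul_sum, sum_comm, ← sum_add_sum_compl B]
    gcongr with i hi i hi
    · exact fun b _ _ => hP0 i b
    · exact (hT i hi).trans subset_union_left
    · exact fun b _ _ => hP0 i b
    · exact (subset_biUnion_of_mem D hi).trans subset_union_right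
  have hQS : ∑ b ∈ S, Q b ≤ ∑ b ∈ E, Q b + Real.exp (-r) := by
    grw [sum_union_le_add hQ0, sum_biUnion_le_sum_sum hQ0,
      sum_sum_filter_le_exp_neg hM hP0 (fun i => (hP1 i).le)]
  have hmin := card_mul_dite_inf'_le_sum (f := fun i => ∑ b ∈ T i, P i b) B
  have hTV := sum_sub_sum_le_half_sum_abs hmass S
  rw [← mul_sum]
  generalize (if h : B.Nonempty then B.inf' h _ else (0 : ℝ)) = m at hmin ⊢
  have hM' : (0 : ℝ) ≤ 1 / M := by positivity
  linarith [mul_le_mul_of_nonneg_left hmin hM', show (#B : ℝ) / M * m = 1 / M * (#B * m) by ring]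

end Sums

section EmpiricalDist

variable {X Y : Type*} [DecidableEq X] [DecidableEq Y] {n : ℕ}

noncomputable def empiricalDist (x : Fin n → X) (a : X) : ℝ :=
  ((univ.filter fun k => x k = a).card : ℝ) / n

noncomputable def jointEmpiricalDist (x : Fin n → X) (y : Fin n → Y) (a : X) (b : Y) : ℝ :=
  ((univ.filter fun k => x k = a ∧ y k = b).card : ℝ) / n

lemma sum_jointEmpiricalDist [Fintype X] (x : Fin n → X) (y : Fin n → Y) (b : Y) :
    ∑ a, jointEmpiricalDist x y a b = empiricalDist y b := by
  simp only [jointEmpiricalDist, empiricalDist, ← sum_div]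
  rw [card_eq_sum_card_fiberwise (f := x) (t := univ) fun k _ => mem_univ _]
  push_cast
  simp only [filter_filter, and_comm]

lemma abs_empiricalDist_sub_sum_le [Fintype X] (W : X → Y → ℝ) {x : Fin n → X}
    {y : Fin n → Y} {b : Y} {δ : ℝ}
    (hxy : ∀ a, |jointEmpiricalDist x y a b - empiricalDist x a * W a b| ≤ δ) :
    |empiricalDist y b - ∑ a, empiricalDist x a * W a b| ≤ Fintype.card X * δ :=
  calc |empiricalDist y b - ∑ a, empiricalDist x a * W a b|
      = |∑ a, (jointEmpiricalDist x y a b - empiricalDist x a * W a b)| := by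
        rw [sum_sub_distrib, sum_jointEmpiricalDist]
    _ ≤ ∑ a, |jointEmpiricalDist x y a b - empiricalDist x a * W a b| := abs_sum_le_sum_abs ..
    _ ≤ ∑ _a : X, δ := sum_le_sum fun a _ => hxy a
    _ = Fintype.card X * δ := by rw [sum_const, card_univ, nsmul_eq_mul]

noncomputable def typicalSet [Fintype Y] (q : Y → ℝ) (ε : ℝ) : Finset (Fin n → Y) :=
  univ.filter fun y => ∀ b, |empiricalDist y b - q b| ≤ ε

noncomputable def condTypicalSet [Fintype X] [Fintype Y] (W : X → Y → ℝ) (δ : ℝ) (x : Fin n → X) :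
    Finset (Fin n → Y) :=
  univ.filter fun y => ∀ a b, |jointEmpiricalDist x y a b - empiricalDist x a * W a b| ≤ δ ∧
    (W a b = 0 → jointEmpiricalDist x y a b = 0)

lemma condTypicalSet_subset_compl_typicalSet [Fintype X] [Fintype Y] (W : X → Y → ℝ)
    (q : Y → ℝ) {δ : ℝ} {x : Fin n → X}
    (hx : ∃ b, 2 * Fintype.card X * δ < |∑ a, empiricalDist x a * W a b - q b|) :
    condTypicalSet W δ x ⊆ (typicalSet q (Fintype.card X * δ))ᶜ := by
  intro y hy
  obtain ⟨b, hb⟩ := hx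
  have hclose := abs_empiricalDist_sub_sum_le W fun a => ((mem_filter.1 hy).2 a b).1
  have htri := abs_sub_le (∑ a, empiricalDist x a * W a b) (empiricalDist y b) (q b)
  rw [abs_sub_comm] at hclose
  simp only [typicalSet, mem_compl, mem_filter, mem_univ, true_and, not_forall, not_le]
  exact ⟨b, by linarith⟩

end EmpiricalDist

theorem stmt_8_general {X Y : Type*} [Fintype X] [Fintype Y] [DecidableEq X] [DecidableEq Y]
    (W : X → Y → ℝ) (p : X → ℝ)
    (hW0 : ∀ x y, 0 ≤ W x y) (hW1 : ∀ x, ∑ y, W x y = 1)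
    (hp0 : ∀ x, 0 ≤ p x) (hp1 : ∑ x, p x = 1)
    (n M : ℕ) (hM : 0 < M)
    (c : Fin M → Fin n → X) (δ α : ℝ) :
    let Wp : Y → ℝ := fun y => ∑ x, p x * W x y
    let Px : (Fin n → X) → X → ℝ := fun x a =>
      ((univ.filter fun k => x k = a).card : ℝ) / n
    let Pxy : (Fin n → X) → (Fin n → Y) → X → Y → ℝ := fun x y a b =>
      ((univ.filter fun k => x k = a ∧ y k = b).card : ℝ) / n
    let Py : (Fin n → Y) → Y → ℝ := fun y b =>
      ((univ.filter fun k => y k = b).card : ℝ) / n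
    let Wn : (Fin n → X) → (Fin n → Y) → ℝ := fun x y => ∏ k, W (x k) (y k)
    let Wpn : (Fin n → Y) → ℝ := fun y => ∏ k, Wp (y k)
    let WC : (Fin n → Y) → ℝ := fun y => (1 / M : ℝ) * ∑ i, Wn (c i) y
    let B : Finset (Fin M) := univ.filter fun i =>
      ∃ b, |(∑ a, Px (c i) a * W a b) - Wp b| > 2 * (Fintype.card X) * δ
    let TW : (Fin n → X) → Finset (Fin n → Y) := fun x => univ.filter fun y =>
      ∀ a b, |Pxy x y a b - Px x a * W a b| ≤ δ ∧ (W a b = 0 → Pxy x y a b = 0)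
    let Tp : Finset (Fin n → Y) := univ.filter fun y =>
      ∀ b, |Py y b - Wp b| ≤ (Fintype.card X) * δ
    (1 / 2 : ℝ) * ∑ y, |WC y - Wpn y| ≥
      ((B.card : ℝ) / M) *
        (if h : B.Nonempty then B.inf' h (fun i => ∑ y ∈ TW (c i), Wn (c i) y) else 0)
      + (∑ i ∈ Bᶜ, (1 / M : ℝ) *
          ∑ y ∈ univ.filter (fun y => 0 ≤ Wn (c i) y - Real.exp α * M * Wpn y),
            Wn (c i) y)
      - Real.exp (-α) - ∑ y ∈ Tpᶜ, Wpn y := by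
  intro Wp Px Pxy Py Wn Wpn WC B TW Tp
  have hWp0 : ∀ b, 0 ≤ Wp b := fun b => sum_nonneg fun a _ => mul_nonneg (hp0 a) (hW0 a b)
  have hWp1 : ∑ b, Wp b = 1 := by
    simp only [Wp]
    rw [sum_comm]
    simp [← mul_sum, hW1, hp1]
  have hWn0 : ∀ x y, 0 ≤ Wn x y := fun x y => prod_nonneg fun _ _ => hW0 _ _
  have hWpn0 : ∀ y, 0 ≤ Wpn y := fun y => prod_nonneg fun _ _ => hWp0 _
  have hWn1 : ∀ x, ∑ y, Wn x y = 1 := fun x => sum_pi_prod_eq_one _ fun k => hW1 (x k)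
  have hWpn1 : ∑ y, Wpn y = 1 := sum_pi_prod_eq_one _ fun _ => hWp1
  have hTW : ∀ i ∈ B, TW (c i) ⊆ Tpᶜ := fun i hi =>
    condTypicalSet_subset_compl_typicalSet W Wp (mem_filter.1 hi).2
  exact le_half_sum_abs_mixture_sub hM (fun i => hWn0 (c i)) (fun i => hWn1 (c i)) hWpn0 hWpn1
    B (fun i => TW (c i)) Tpᶜ hTW α

/-- Key converse lemma: for a resolvability code `c`, with `B` the set of
indices of atypical codewords and `δ' = |X|δ`, for any `α ≥ 0`,
`(1/2)‖W_C − W_p^n‖₁ ≥ (|B|/M)·minᵢ∈B W_{xᵢ}^n(T_{W,δ}(xᵢ))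
  + Σᵢ∈Bᶜ (1/M) W_{xᵢ}^n{W_{xᵢ}^n − e^α M W_p^n ≥ 0} − e^{−α} − W_p^n(T_{W_p,δ'}ᶜ)`. -/
theorem stmt_8 {X Y : Type*} [Fintype X] [Fintype Y] [DecidableEq X] [DecidableEq Y]
    (W : X → Y → ℝ) (p : X → ℝ)
    (hW0 : ∀ x y, 0 ≤ W x y) (hW1 : ∀ x, ∑ y, W x y = 1)
    (hp0 : ∀ x, 0 ≤ p x) (hp1 : ∑ x, p x = 1)
    (n M : ℕ) (hn : 0 < n) (hM : 0 < M)
    (c : Fin M → Fin n → X) (δ α : ℝ) (hδ : 0 < δ) (hα : 0 ≤ α) :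
    let Wp : Y → ℝ := fun y => ∑ x, p x * W x y
    let Px : (Fin n → X) → X → ℝ := fun x a =>
      ((univ.filter fun k => x k = a).card : ℝ) / n
    let Pxy : (Fin n → X) → (Fin n → Y) → X → Y → ℝ := fun x y a b =>
      ((univ.filter fun k => x k = a ∧ y k = b).card : ℝ) / n
    let Py : (Fin n → Y) → Y → ℝ := fun y b =>
      ((univ.filter fun k => y k = b).card : ℝ) / n
    let Wn : (Fin n → X) → (Fin n → Y) → ℝ := fun x y => ∏ k, W (x k) (y k)
    let Wpn : (Fin n → Y) → ℝ := fun y => ∏ k, Wp (y k)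
    let WC : (Fin n → Y) → ℝ := fun y => (1 / M : ℝ) * ∑ i, Wn (c i) y
    let B : Finset (Fin M) := univ.filter fun i =>
      ∃ b, |(∑ a, Px (c i) a * W a b) - Wp b| > 2 * (Fintype.card X) * δ
    let TW : (Fin n → X) → Finset (Fin n → Y) := fun x => univ.filter fun y =>
      ∀ a b, |Pxy x y a b - Px x a * W a b| ≤ δ ∧ (W a b = 0 → Pxy x y a b = 0)
    let Tp : Finset (Fin n → Y) := univ.filter fun y =>
      ∀ b, |Py y b - Wp b| ≤ (Fintype.card X) * δ
    (1 / 2 : ℝ) * ∑ y, |WC y - Wpn y| ≥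
      ((B.card : ℝ) / M) *
        (if h : B.Nonempty then B.inf' h (fun i => ∑ y ∈ TW (c i), Wn (c i) y) else 0)
      + (∑ i ∈ Bᶜ, (1 / M : ℝ) *
          ∑ y ∈ univ.filter (fun y => 0 ≤ Wn (c i) y - Real.exp α * M * Wpn y),
            Wn (c i) y)
      - Real.exp (-α) - ∑ y ∈ Tpᶜ, Wpn y :=
  stmt_8_general W p hW0 hW1 hp0 hp1 n M hM c δ α
end

section
/- For any input distribution q on X with W_q = W_p and any real C > 0 and code size M, there exists a code C_M = {x₁,…,x_M} ⊆ Xⁿ (drawn i.i.d. from q^n in the random-coding argument) such that (1/2)‖W_{C_M} − W_{p}^n‖₁ ≤ Σ_x q^n(x) W_x^n{W_x^n − C·W_p^n ≥ 0} + (1/2)√(C/M). -/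
/-!
Random coding. Draw the `M` codewords independently from `qⁿ`; some code is at least as good as
the average, so it suffices to bound the expected distance output by output. Because `W_q = W_p`,
the expectation of `Wₓⁿ(y)` over `x ~ qⁿ` is `Wₚⁿ(y)`. Split `Wₓⁿ(y)` into the part where
`Wₓⁿ(y) ≥ C Wₚⁿ(y)` and the remainder `h ≤ C Wₚⁿ(y)`. The first part and its mean are both
nonnegative, so it costs at most twice its mean, which gives the first term. The empirical mean
of `h` over the code deviates from its expectation by at most `√(Var h / M) ≤ √(C Wₚⁿ(y) E h / M)
≤ √(C / M) Wₚⁿ(y)` in expectation (Cauchy–Schwarz), and these sum to `√(C / M)` over `y`.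
-/

open Finset

theorem abs_add_sub_add_le {x u : ℝ} (hx : 0 ≤ x) (hu : 0 ≤ u) (y v : ℝ) :
    |x + y - (u + v)| ≤ x + u + |y - v| :=
  abs_le.2 ⟨by linarith [neg_abs_le (y - v)], by linarith [le_abs_self (y - v)]⟩

theorem sum_mul_abs_le_sqrt_sum_mul_sq {α : Type*} [Fintype α] {P : α → ℝ}
    (hP0 : ∀ a, 0 ≤ P a) (hP1 : ∑ a, P a = 1) (S : α → ℝ) :
    ∑ a, P a * |S a| ≤ √(∑ a, P a * S a ^ 2) := by
  refine Real.le_sqrt_of_sq_le ?_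
  simpa [hP1] using sum_sq_le_sum_mul_sum_of_sq_le_mul univ (fun a _ => hP0 a)
    (fun a _ => mul_nonneg (hP0 a) (sq_nonneg (S a))) (r := fun a => P a * |S a|)
    (fun a _ => by rw [mul_pow, sq_abs]; exact le_of_eq (by ring))

theorem exists_le_sum_mul {α : Type*} [Fintype α] {P : α → ℝ}
    (hP0 : ∀ a, 0 ≤ P a) (hP1 : ∑ a, P a = 1) (f : α → ℝ) :
    ∃ a, f a ≤ ∑ a', P a' * f a' := by
  have : Nonempty α := by
    by_contra h
    simp [not_nonempty_iff.mp h] at hP1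
  obtain ⟨a, -, ha⟩ := exists_min_image univ f univ_nonempty
  refine ⟨a, ?_⟩
  calc f a = ∑ a', P a' * f a := by rw [← sum_mul, hP1, one_mul]
    _ ≤ ∑ a', P a' * f a' :=
        sum_le_sum fun a' _ => mul_le_mul_of_nonneg_left (ha a' (mem_univ _)) (hP0 a')

section RandomCode

/- `∑ c : ι → Ω, (∏ i, w (c i)) * F c` is the expectation of `F` over a codebook `c` whose
entries are drawn independently from the probability weights `w`. -/

variable {ι Ω : Type*} [Fintype ι] [DecidableEq ι] [Fintype Ω] {w : Ω → ℝ}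

theorem sum_pi_prod_mul_prod (w : Ω → ℝ) (F : ι → Ω → ℝ) :
    ∑ c : ι → Ω, (∏ i, w (c i)) * ∏ i, F i (c i) = ∏ i, ∑ z, w z * F i z := by
  simp only [Fintype.prod_sum, prod_mul_distrib]

theorem sum_pi_prod (hw : ∑ z, w z = 1) : ∑ c : ι → Ω, ∏ i, w (c i) = 1 := by
  simpa [hw] using sum_pi_prod_mul_prod (ι := ι) w fun _ _ => 1

theorem sum_pi_prod_mul_apply (hw : ∑ z, w z = 1) (i : ι) (f : Ω → ℝ) :
    ∑ c : ι → Ω, (∏ j, w (c j)) * f (c i) = ∑ z, w z * f z := by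
  simpa [prod_ite_eq', apply_ite, hw] using
    sum_pi_prod_mul_prod w fun j z => if j = i then f z else 1

theorem sum_pi_prod_mul_apply_mul_apply (hw : ∑ z, w z = 1) {i j : ι} (hij : i ≠ j)
    (f g : Ω → ℝ) :
    ∑ c : ι → Ω, (∏ k, w (c k)) * (f (c i) * g (c j)) =
      (∑ z, w z * f z) * ∑ z, w z * g z := by
  have h := sum_pi_prod_mul_prod w fun k z =>
    (if k = i then f z else 1) * (if k = j then g z else 1)
  simp only [prod_mul_distrib, prod_ite_eq', mem_univ, if_true] at h
  calc _ = ∏ k, (if k = i then ∑ z, w z * f z else 1) * (if k = j then ∑ z, w z * g z else 1) :=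
        h.trans <| prod_congr rfl fun k _ => by
          by_cases hki : k = i <;> by_cases hkj : k = j <;> simp_all
    _ = _ := by simp only [prod_mul_distrib, prod_ite_eq', mem_univ, if_true]

theorem sum_pi_prod_mul_average (hw : ∑ z, w z = 1) {M : ℕ} (hM : M ≠ 0) (f : Ω → ℝ) :
    ∑ c : Fin M → Ω, (∏ i, w (c i)) * ((1 / M : ℝ) * ∑ i, f (c i)) = ∑ z, w z * f z := by
  simp_rw [mul_left_comm _ (1 / (M : ℝ)), mul_sum]
  rw [sum_comm]
  simp [sum_pi_prod_mul_apply hw, ← mul_sum, hM]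

theorem sum_pi_prod_mul_average_sq (hw : ∑ z, w z = 1) {M : ℕ} {f : Ω → ℝ}
    (hf : ∑ z, w z * f z = 0) :
    ∑ c : Fin M → Ω, (∏ i, w (c i)) * ((1 / M : ℝ) * ∑ i, f (c i)) ^ 2 =
      (∑ z, w z * f z ^ 2) / M := by
  have hcross (i j : Fin M) :
      ∑ c : Fin M → Ω, (∏ k, w (c k)) * (f (c i) * f (c j)) =
        if i = j then ∑ z, w z * f z ^ 2 else 0 := by
    split_ifs with hij
    · subst hij
      simpa [sq] using sum_pi_prod_mul_apply hw i fun z => f z * f z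
    · rw [sum_pi_prod_mul_apply_mul_apply hw hij, hf, zero_mul]
  calc ∑ c : Fin M → Ω, (∏ i, w (c i)) * ((1 / M : ℝ) * ∑ i, f (c i)) ^ 2
      = (1 / M : ℝ) ^ 2 * ∑ i, ∑ j, ∑ c : Fin M → Ω, (∏ k, w (c k)) * (f (c i) * f (c j)) := by
        simp_rw [mul_pow, sq (∑ i, _), sum_mul_sum, mul_sum]
        rw [sum_comm]
        refine sum_congr rfl fun i _ => ?_
        rw [sum_comm]
        exact sum_congr rfl fun j _ => sum_congr rfl fun c _ => by ring
    _ = (∑ z, w z * f z ^ 2) / M := by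
        simp only [hcross, sum_ite_eq, mem_univ, if_true, sum_const, card_univ, Fintype.card_fin,
          nsmul_eq_mul]
        rcases eq_or_ne (M : ℝ) 0 with hM | hM
        · simp [hM]
        · field_simp

theorem sum_mul_sub_sq_le_sum_mul_sq (hw : ∑ z, w z = 1) (f : Ω → ℝ) :
    ∑ z, w z * (f z - ∑ z', w z' * f z') ^ 2 ≤ ∑ z, w z * f z ^ 2 := by
  set m := ∑ z, w z * f z
  have h : ∑ z, w z * (f z - m) ^ 2 = ∑ z, w z * f z ^ 2 - m ^ 2 := by
    have hcross : ∑ z, w z * (2 * f z * m) = 2 * m * m := by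
      rw [mul_sum]
      exact sum_congr rfl fun _ _ => by ring
    simp_rw [sub_sq, mul_add, mul_sub, sum_add_distrib, sum_sub_distrib]
    rw [← sum_mul, hw, hcross]
    ring
  rw [h]
  exact sub_le_self _ (sq_nonneg _)

theorem sum_pi_prod_mul_abs_average_sub_le (hw0 : ∀ z, 0 ≤ w z) (hw1 : ∑ z, w z = 1)
    {M : ℕ} (hM : M ≠ 0) (f : Ω → ℝ) :
    ∑ c : Fin M → Ω, (∏ i, w (c i)) * |(1 / M : ℝ) * (∑ i, f (c i)) - ∑ z, w z * f z| ≤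
      √((∑ z, w z * f z ^ 2) / M) := by
  set m := ∑ z, w z * f z
  have hcentered : ∑ z, w z * (f z - m) = 0 := by
    simp only [mul_sub, sum_sub_distrib, ← sum_mul, hw1, one_mul, m, sub_self]
  have hrecenter (c : Fin M → Ω) :
      (1 / M : ℝ) * (∑ i, f (c i)) - m = (1 / M : ℝ) * ∑ i, (f (c i) - m) := by
    rw [sum_sub_distrib, sum_const, card_univ, Fintype.card_fin, nsmul_eq_mul]
    field_simp
  simp_rw [hrecenter]
  calc _ ≤ √(∑ c : Fin M → Ω, (∏ i, w (c i)) * ((1 / M : ℝ) * ∑ i, (f (c i) - m)) ^ 2) :=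
        sum_mul_abs_le_sqrt_sum_mul_sq (fun c => prod_nonneg fun i _ => hw0 (c i))
          (sum_pi_prod hw1) _
    _ ≤ √((∑ z, w z * f z ^ 2) / M) := by
        rw [sum_pi_prod_mul_average_sq hw1 hcentered]
        gcongr √(?_ / _)
        exact sum_mul_sub_sq_le_sum_mul_sq hw1 f

theorem sum_pi_prod_mul_abs_average_sub_le_of_sq_le (hw0 : ∀ z, 0 ≤ w z) (hw1 : ∑ z, w z = 1)
    {M : ℕ} (hM : M ≠ 0) {h : Ω → ℝ} {C r : ℝ} (hh0 : ∀ z, 0 ≤ h z)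
    (hh : ∀ z, h z ^ 2 ≤ C * r * h z) (hhr : ∑ z, w z * h z ≤ r) :
    ∑ c : Fin M → Ω, (∏ i, w (c i)) * |(1 / M : ℝ) * (∑ i, h (c i)) - ∑ z, w z * h z| ≤
      √(C / M) * r := by
  have hμ0 : 0 ≤ ∑ z, w z * h z := sum_nonneg fun z _ => mul_nonneg (hw0 z) (hh0 z)
  have hr0 : 0 ≤ r := hμ0.trans hhr
  have hmom : ∑ z, w z * h z ^ 2 ≤ C * r * ∑ z, w z * h z := by
    rw [mul_sum]
    refine sum_le_sum fun z _ => ?_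
    calc w z * h z ^ 2 ≤ w z * (C * r * h z) := mul_le_mul_of_nonneg_left (hh z) (hw0 z)
      _ = C * r * (w z * h z) := by ring
  calc _ ≤ √((∑ z, w z * h z ^ 2) / M) := sum_pi_prod_mul_abs_average_sub_le hw0 hw1 hM h
    _ ≤ √(C / M * (r * ∑ z, w z * h z)) := by
        refine Real.sqrt_le_sqrt ?_
        calc (∑ z, w z * h z ^ 2) / M ≤ C * r * (∑ z, w z * h z) / M := by gcongr
          _ = C / M * (r * ∑ z, w z * h z) := by ring
    _ = √(C / M) * √(r * ∑ z, w z * h z) := Real.sqrt_mul' _ (mul_nonneg hr0 hμ0)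
    _ ≤ √(C / M) * r := by
        gcongr
        exact Real.sqrt_le_iff.mpr ⟨hr0, by nlinarith⟩

theorem sum_pi_prod_mul_abs_average_sub_le_of_threshold (hw0 : ∀ z, 0 ≤ w z)
    (hw1 : ∑ z, w z = 1) {M : ℕ} (hM : M ≠ 0) {a : Ω → ℝ} (ha : ∀ z, 0 ≤ a z) (C : ℝ) :
    ∑ c : Fin M → Ω, (∏ i, w (c i)) * |(1 / M : ℝ) * (∑ i, a (c i)) - ∑ z, w z * a z| ≤
      2 * ∑ z, w z * (if 0 ≤ a z - C * ∑ z', w z' * a z' then a z else 0) +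
        √(C / M) * ∑ z, w z * a z := by
  set r := ∑ z, w z * a z
  set g := fun z => if 0 ≤ a z - C * r then a z else 0
  set h := fun z => a z - g z
  have hg0 (z : Ω) : 0 ≤ g z := by
    simp only [g]; split_ifs <;> simp [ha z]
  have hh0 (z : Ω) : 0 ≤ h z := by
    simp only [h, g]; split_ifs <;> simp [ha z]
  have hh_sq (z : Ω) : h z ^ 2 ≤ C * r * h z := by
    simp only [h, g]; split_ifs with hz
    · simp
    · rw [sub_zero, sq]; exact mul_le_mul_of_nonneg_right (by linarith) (ha z)
  have hν0 : 0 ≤ ∑ z, w z * g z := sum_nonneg fun z _ => mul_nonneg (hw0 z) (hg0 z)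
  have hr : r = ∑ z, w z * g z + ∑ z, w z * h z := by
    simp only [r, ← sum_add_distrib, ← mul_add, h, add_sub_cancel]
  have hpoint (c : Fin M → Ω) :
      |(1 / M : ℝ) * (∑ i, a (c i)) - r| ≤ (1 / M : ℝ) * (∑ i, g (c i)) +
        ∑ z, w z * g z + |(1 / M : ℝ) * (∑ i, h (c i)) - ∑ z, w z * h z| := by
    have hsplit : ∑ i, a (c i) = ∑ i, g (c i) + ∑ i, h (c i) := by
      simp only [h, ← sum_add_distrib, add_sub_cancel]
    have hg : 0 ≤ (1 / M : ℝ) * ∑ i, g (c i) :=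
      mul_nonneg (by positivity) (sum_nonneg fun i _ => hg0 (c i))
    rw [hsplit, hr, mul_add]
    exact abs_add_sub_add_le hg hν0 _ _
  calc ∑ c : Fin M → Ω, (∏ i, w (c i)) * |(1 / M : ℝ) * (∑ i, a (c i)) - r|
      ≤ ∑ c : Fin M → Ω, (∏ i, w (c i)) * ((1 / M : ℝ) * (∑ i, g (c i)) +
          ∑ z, w z * g z + |(1 / M : ℝ) * (∑ i, h (c i)) - ∑ z, w z * h z|) :=
        sum_le_sum fun c _ =>
          mul_le_mul_of_nonneg_left (hpoint c) (prod_nonneg fun i _ => hw0 (c i))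
    _ = ∑ c : Fin M → Ω, (∏ i, w (c i)) * ((1 / M : ℝ) * ∑ i, g (c i)) + ∑ z, w z * g z +
          ∑ c : Fin M → Ω, (∏ i, w (c i)) *
            |(1 / M : ℝ) * (∑ i, h (c i)) - ∑ z, w z * h z| := by
        simp only [mul_add, sum_add_distrib, ← sum_mul, sum_pi_prod hw1, one_mul]
    _ ≤ 2 * ∑ z, w z * g z + √(C / M) * r := by
        rw [sum_pi_prod_mul_average hw1 hM]
        linarith [sum_pi_prod_mul_abs_average_sub_le_of_sq_le hw0 hw1 hM hh0 hh_sq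
          (by linarith : ∑ z, w z * h z ≤ r)]

end RandomCode

theorem exists_code_half_sum_abs_average_sub_le {Ω Y : Type*} [Fintype Ω] [Fintype Y]
    {w : Ω → ℝ} (hw0 : ∀ z, 0 ≤ w z) (hw1 : ∑ z, w z = 1) {V : Ω → Y → ℝ}
    (hV0 : ∀ z y, 0 ≤ V z y) (hV1 : ∀ z, ∑ y, V z y = 1) {R : Y → ℝ}
    (hR : ∀ y, ∑ z, w z * V z y = R y) {M : ℕ} (hM : M ≠ 0) (C : ℝ) :
    ∃ c : Fin M → Ω,
      (1 / 2 : ℝ) * ∑ y, |(1 / M : ℝ) * (∑ i, V (c i) y) - R y| ≤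
        (∑ z, w z * ∑ y ∈ univ.filter (fun y => 0 ≤ V z y - C * R y), V z y) +
          (1 / 2 : ℝ) * √(C / M) := by
  have hR1 : ∑ y, R y = 1 := by
    simp only [← hR]
    rw [sum_comm]
    simp [← mul_sum, hV1, hw1]
  obtain ⟨c, hc⟩ := exists_le_sum_mul (fun c => prod_nonneg fun i _ => hw0 (c i))
    (sum_pi_prod (ι := Fin M) hw1) fun c => ∑ y, |(1 / M : ℝ) * (∑ i, V (c i) y) - R y|
  refine ⟨c, ?_⟩
  have hexp : ∑ c : Fin M → Ω, (∏ i, w (c i)) * ∑ y, |(1 / M : ℝ) * (∑ i, V (c i) y) - R y| ≤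
      2 * (∑ z, w z * ∑ y ∈ univ.filter (fun y => 0 ≤ V z y - C * R y), V z y) + √(C / M) :=
    calc _ = ∑ y, ∑ c : Fin M → Ω, (∏ i, w (c i)) * |(1 / M : ℝ) * (∑ i, V (c i) y) - R y| := by
          simp_rw [mul_sum]
          exact sum_comm
      _ ≤ ∑ y, (2 * ∑ z, w z * (if 0 ≤ V z y - C * R y then V z y else 0) + √(C / M) * R y) :=
          sum_le_sum fun y _ => by
            simpa only [hR] using sum_pi_prod_mul_abs_average_sub_le_of_threshold hw0 hw1 hM
              (a := fun z => V z y) (fun z => hV0 z y) C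
      _ = _ := by
          rw [sum_add_distrib, ← mul_sum, ← mul_sum, hR1, mul_one, sum_comm]
          simp only [sum_filter, mul_sum]
  linarith

theorem stmt_18_general {X Y : Type*} [Fintype X] [Fintype Y]
    (W : X → Y → ℝ) (p q : X → ℝ)
    (hW0 : ∀ x y, 0 ≤ W x y) (hW1 : ∀ x, ∑ y, W x y = 1)
    (hq0 : ∀ x, 0 ≤ q x) (hq1 : ∑ x, q x = 1)
    (heq : ∀ y, ∑ x, q x * W x y = ∑ x, p x * W x y)
    (n M : ℕ) (hM : 0 < M) (C : ℝ) :
    let Wp : Y → ℝ := fun y => ∑ x, p x * W x y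
    let Wn : (Fin n → X) → (Fin n → Y) → ℝ := fun x y => ∏ k, W (x k) (y k)
    let Wpn : (Fin n → Y) → ℝ := fun y => ∏ k, Wp (y k)
    let qn : (Fin n → X) → ℝ := fun x => ∏ k, q (x k)
    ∃ c : Fin M → Fin n → X,
      (1 / 2 : ℝ) * ∑ y, |(1 / M : ℝ) * (∑ i, Wn (c i) y) - Wpn y| ≤
        (∑ x : Fin n → X, qn x *
          ∑ y ∈ univ.filter (fun y => 0 ≤ Wn x y - C * Wpn y), Wn x y)
        + (1 / 2 : ℝ) * Real.sqrt (C / M) := by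
  intro Wp Wn Wpn qn
  have hWn1 (x : Fin n → X) : ∑ y, Wn x y = 1 := by
    simp [Wn, ← Fintype.prod_sum fun k z => W (x k) z, hW1]
  have hmarginal (y : Fin n → Y) : ∑ x, qn x * Wn x y = Wpn y := by
    simpa [heq] using sum_pi_prod_mul_prod q fun k z => W z (y k)
  exact exists_code_half_sum_abs_average_sub_le (fun x => prod_nonneg fun k _ => hq0 (x k))
    (sum_pi_prod hq1) (fun x y => prod_nonneg fun k _ => hW0 (x k) (y k)) hWn1 hmarginal
    hM.ne' C

/-- Soft-covering achievability: for `q` with `W_q = W_p`, any `C > 0` and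
code size `M`, there exists a code `c : Fin M → Xⁿ` with
`(1/2)‖W_C − W_p^n‖₁ ≤ Σ_x q^n(x) W_x^n{W_x^n − C W_p^n ≥ 0} + (1/2)√(C/M)`. -/
theorem stmt_18 {X Y : Type*} [Fintype X] [Fintype Y]
    (W : X → Y → ℝ) (p q : X → ℝ)
    (hW0 : ∀ x y, 0 ≤ W x y) (hW1 : ∀ x, ∑ y, W x y = 1)
    (hp0 : ∀ x, 0 ≤ p x) (hp1 : ∑ x, p x = 1)
    (hq0 : ∀ x, 0 ≤ q x) (hq1 : ∑ x, q x = 1)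
    (heq : ∀ y, ∑ x, q x * W x y = ∑ x, p x * W x y)
    (n M : ℕ) (hn : 0 < n) (hM : 0 < M) (C : ℝ) (hC : 0 < C) :
    let Wp : Y → ℝ := fun y => ∑ x, p x * W x y
    let Wn : (Fin n → X) → (Fin n → Y) → ℝ := fun x y => ∏ k, W (x k) (y k)
    let Wpn : (Fin n → Y) → ℝ := fun y => ∏ k, Wp (y k)
    let qn : (Fin n → X) → ℝ := fun x => ∏ k, q (x k)
    ∃ c : Fin M → Fin n → X,
      (1 / 2 : ℝ) * ∑ y, |(1 / M : ℝ) * (∑ i, Wn (c i) y) - Wpn y| ≤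
        (∑ x : Fin n → X, qn x *
          ∑ y ∈ univ.filter (fun y => 0 ≤ Wn x y - C * Wpn y), Wn x y)
        + (1 / 2 : ℝ) * Real.sqrt (C / M) :=
  stmt_18_general W p q hW0 hW1 hq0 hq1 heq n M hM C
end
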